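/- For $k \ge 0$, $V_k(1/2,1/2) = 4^k$, where $V_k(\alpha,\beta) = \sum_{i=0}^{k}\sum_{j=0}^{k-i} C^{k-1}_{k-i-j}\alpha^{-i}\beta^{-j}$. -/

import Mathlib

/-!
Grouping the terms of `V k (1/2) (1/2)` by `t = i + j` gives `∑ t, (t + 1) 2^t C^{k-1}_{k-t}`.
In the index `m = k - t` the ballot numbers of row `n + 1` are the partial sums
`C^{n+1}_m = ∑_{j ≤ m} C^n_j` of row `n`, and summing the weights `(n + 3 - m) 2^{n+2-m}` over
`m ≥ j` gives `4 (n + 2 - j) 2^{n+1-j}`, four times the weight of `j` in row `n`. Hence the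
weighted row sums quadruple from one row to the next.
-/

/-- Ballot numbers `C^n_k = C(n+k, n) - C(n+k, n+1)` (with `C^{-1}_0 = 1`,
as given by the truncated subtraction in the index `k - 1` below). -/
def ballot (n k : ℕ) : ℕ := (n + k).choose n - (n + k).choose (n + 1)

/-- `V_k(α,β) = ∑_{i=0}^k ∑_{j=0}^{k-i} C^{k-1}_{k-i-j} α^{-i} β^{-j}`. -/
def V (k : ℕ) (α β : ℚ) : ℚ :=
  ∑ i ∈ Finset.range (k + 1), ∑ j ∈ Finset.range (k - i + 1),
    (ballot (k - 1) (k - i - j) : ℚ) * α⁻¹ ^ i * β⁻¹ ^ j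

open Finset

theorem sum_range_sum_range_sub_add {M : Type*} [AddCommMonoid M] (f : ℕ → M) (n : ℕ) :
    ∑ i ∈ range (n + 1), ∑ j ∈ range (n - i + 1), f (i + j) =
      ∑ t ∈ range (n + 1), (t + 1) • f t := by
  have h := sum_Ico_Ico_comm 0 (n + 1) fun _ t => f t
  simp only [← Nat.Ico_zero_eq_range, sum_Ico_eq_sum_range, sum_const, Nat.card_Ico,
    Nat.sub_zero, zero_add] at h ⊢
  convert h using 3 with i hi
  rw [mem_range] at hi
  congr 1
  omega

theorem ballot_zero_right (n : ℕ) : ballot n 0 = 1 := by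
  simp [ballot]

theorem ballot_self_succ (n : ℕ) : ballot n (n + 1) = 0 := by
  rw [ballot, Nat.sub_eq_zero_iff_le, ← Nat.choose_symm_of_eq_add]
  omega

theorem choose_succ_le_choose {n m : ℕ} (hm : m ≤ n + 1) :
    (n + m).choose (n + 1) ≤ (n + m).choose n := by
  refine Nat.le_of_mul_le_mul_right (c := n + 1) ?_ n.succ_pos
  rw [Nat.choose_succ_right_eq, Nat.add_sub_cancel_left]
  exact Nat.mul_le_mul_left _ hm

theorem ballot_succ_succ {n m : ℕ} (hm : m ≤ n) :
    ballot (n + 1) (m + 1) = ballot n (m + 1) + ballot (n + 1) m := by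
  have h₁ := choose_succ_le_choose (n := n) (m := m + 1) (by omega)
  have h₂ := choose_succ_le_choose (n := n + 1) (m := m) (by omega)
  have p₁ := Nat.choose_succ_succ' (n + m + 1) n
  have p₂ := Nat.choose_succ_succ' (n + m + 1) (n + 1)
  simp only [ballot, show n + 1 + (m + 1) = n + m + 1 + 1 by omega,
    show n + (m + 1) = n + m + 1 by omega, show n + 1 + m = n + m + 1 by omega] at *
  omega

theorem ballot_succ_eq_sum_range {n m : ℕ} (hm : m ≤ n + 1) :
    ballot (n + 1) m = ∑ j ∈ range (m + 1), ballot n j := by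
  induction m with
  | zero => simp [ballot_zero_right]
  | succ m ih =>
    rw [ballot_succ_succ (by omega), ih (by omega), sum_range_succ _ (m + 1)]
    ring

theorem sum_range_add_two_mul_two_pow (H : ℕ) :
    ∑ h ∈ range H, (h + 2) * 2 ^ (h + 1) = H * 2 ^ (H + 1) := by
  induction H with
  | zero => simp
  | succ H ih =>
    rw [sum_range_succ, ih]
    ring

theorem sum_Ico_sub_mul_two_pow {N j : ℕ} (hj : j ≤ N + 1) :
    ∑ m ∈ Ico j (N + 1), (N + 2 - m) * 2 ^ (N + 1 - m) = (N + 1 - j) * 2 ^ (N + 2 - j) := by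
  have h := sum_Ico_reflect (fun h => (h + 2) * 2 ^ (h + 1)) j (le_refl (N + 1))
  rw [Nat.sub_self, Nat.Ico_zero_eq_range, sum_range_add_two_mul_two_pow] at h
  rw [show N + 2 - j = N + 1 - j + 1 by omega, ← h]
  refine sum_congr rfl fun m hm => ?_
  rw [mem_Ico] at hm
  congr 2 <;> omega

def ballotWeightedSum (n : ℕ) : ℕ :=
  ∑ m ∈ range (n + 2), (n + 2 - m) * 2 ^ (n + 1 - m) * ballot n m

theorem ballotWeightedSum_succ (n : ℕ) :
    ballotWeightedSum (n + 1) = 4 * ballotWeightedSum n := by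
  let w m := (n + 3 - m) * 2 ^ (n + 2 - m)
  calc ballotWeightedSum (n + 1)
      = ∑ m ∈ range (n + 2), w m * ∑ j ∈ range (m + 1), ballot n j := by
        rw [ballotWeightedSum, sum_range_succ, ballot_self_succ, mul_zero, add_zero]
        refine sum_congr rfl fun m hm => ?_
        rw [ballot_succ_eq_sum_range (by rw [mem_range] at hm; omega)]
    _ = ∑ j ∈ range (n + 2), (∑ m ∈ Ico j (n + 2), w m) * ballot n j := by
        simp only [mul_sum, sum_mul, ← Nat.Ico_zero_eq_range]
        exact (sum_Ico_Ico_comm 0 (n + 2) fun j m => w m * ballot n j).symm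
    _ = 4 * ballotWeightedSum n := by
        rw [ballotWeightedSum, mul_sum]
        refine sum_congr rfl fun j hj => ?_
        rw [mem_range] at hj
        rw [sum_Ico_sub_mul_two_pow (N := n + 1) (by omega),
          show n + 1 + 2 - j = (n + 1 - j) + 2 by omega, pow_add]
        ring

theorem ballotWeightedSum_eq (n : ℕ) : ballotWeightedSum n = 4 ^ (n + 1) := by
  induction n with
  | zero => simp [ballotWeightedSum, ballot, sum_range_succ]
  | succ n ih => rw [ballotWeightedSum_succ, ih, pow_succ' 4 (n + 1)]

theorem sum_range_succ_mul_two_pow_mul_ballot (k : ℕ) :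
    ∑ t ∈ range (k + 1), (t + 1) * (2 ^ t * ballot (k - 1) (k - t)) = 4 ^ k := by
  cases k with
  | zero => simp [ballot]
  | succ n =>
    rw [← ballotWeightedSum_eq, ballotWeightedSum, ← sum_range_reflect]
    refine sum_congr rfl fun m hm => ?_
    rw [mem_range] at hm
    rw [Nat.add_sub_cancel, Nat.add_sub_cancel, Nat.sub_sub_self (by omega), mul_assoc]
    congr 2
    omega

/-- `V_k(1/2, 1/2) = 4^k`. -/
theorem V_half_half (k : ℕ) : V k (1 / 2) (1 / 2) = 4 ^ k := by
  calc V k (1 / 2) (1 / 2)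
      = ∑ i ∈ range (k + 1), ∑ j ∈ range (k - i + 1),
          (2 : ℚ) ^ (i + j) * ballot (k - 1) (k - (i + j)) := by
        refine sum_congr rfl fun i _ => sum_congr rfl fun j _ => ?_
        rw [one_div, inv_inv, Nat.sub_sub, pow_add]
        ring
    _ = 4 ^ k := by
        rw [sum_range_sum_range_sub_add (M := ℚ) (fun t => 2 ^ t * ballot (k - 1) (k - t))]
        simp only [nsmul_eq_mul]
        exact_mod_cast sum_range_succ_mul_two_pow_mul_ballot k
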